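/- arXiv:1312.1225 — 5 statements merged into one kernel-verified Lean document; each statement's English description precedes it below -/
import Mathlib

section
/- In a rely-guarantee algebra, r‖x⁺ = (r‖x)⁺ (the inequality axiom for transitive closure strengthens to an equality). -/
/-- A rely-guarantee algebra: a trioid `(K,+,·,‖,0,1)` (a dioid for `·` and a
commutative dioid for `‖`, sharing unit `1` and zero `0`), whose additive
structure `(K,+,⊓)` forms a lattice with join given by `+`
(`x ≤ y ↔ x + y = y`), equipped with a Kleene star on the sequential
structure, and a distinguished set `I` of interference constraints closed
under `‖` and `⊓` satisfying the axioms `rg1`–`rg4` (where `x⁺ = x·x⋆`). -/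
class RGAlgebra (K : Type*) extends Semiring K, Lattice K where
  add_idem : ∀ x : K, x + x = x
  le_def : ∀ x y : K, x ≤ y ↔ x + y = y
  par : K → K → K
  par_assoc : ∀ x y z : K, par (par x y) z = par x (par y z)
  par_comm : ∀ x y : K, par x y = par y x
  par_one : ∀ x : K, par x 1 = x
  par_zero : ∀ x : K, par x 0 = 0
  par_distrib : ∀ x y z : K, par x (y + z) = par x y + par x z
  star : K → K
  left_unfold : ∀ x : K, 1 + x * star x ≤ star x
  left_induct : ∀ x y z : K, z + x * y ≤ y → star x * z ≤ y
  right_induct : ∀ x y z : K, z + y * x ≤ y → z * star x ≤ y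
  I : Set K
  par_closed : ∀ r r' : K, r ∈ I → r' ∈ I → par r r' ∈ I
  inf_closed : ∀ r r' : K, r ∈ I → r' ∈ I → r ⊓ r' ∈ I
  rg1 : ∀ r : K, r ∈ I → par r r ≤ r
  rg2 : ∀ r r' : K, r ∈ I → r' ∈ I → r ≤ par r r'
  rg3 : ∀ r x y : K, r ∈ I → par r (x * y) = par r x * par r y
  rg4 : ∀ r x : K, r ∈ I → par r (x * star x) ≤ par r x * star (par r x)

open RGAlgebra

section Aux
variable {K : Type*} [RGAlgebra K]

private lemma rg_le_add_right (a b : K) : a ≤ a + b := by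
  rw [le_def, ← add_assoc, RGAlgebra.add_idem]

private lemma rg_le_add_left (a b : K) : b ≤ a + b := by
  rw [add_comm]; exact rg_le_add_right b a

private lemma rg_add_le {a b c : K} (h1 : a ≤ c) (h2 : b ≤ c) : a + b ≤ c := by
  rw [le_def] at *
  rw [add_assoc, h2, h1]

private lemma rg_mul_le_mul_left {a b : K} (c : K) (h : a ≤ b) : c * a ≤ c * b := by
  rw [le_def] at *
  rw [← mul_add, h]

private lemma rg_mul_le_mul_right {a b : K} (c : K) (h : a ≤ b) : a * c ≤ b * c := by
  rw [le_def] at *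
  rw [← add_mul, h]

private lemma rg_par_mono (r : K) {a b : K} (h : a ≤ b) : par r a ≤ par r b := by
  rw [le_def] at *
  rw [← par_distrib, h]

private lemma rg_one_le_star (x : K) : 1 ≤ star x :=
  le_trans (rg_le_add_right 1 (x * star x)) (left_unfold x)

private lemma rg_mul_star_le_star (x : K) : x * star x ≤ star x :=
  le_trans (rg_le_add_left 1 (x * star x)) (left_unfold x)

private lemma rg_le_mul_star (x : K) : x ≤ x * star x := by
  have := rg_mul_le_mul_left x (rg_one_le_star x)
  rwa [mul_one] at this

private lemma rg_le_star (x : K) : x ≤ star x :=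
  le_trans (rg_le_mul_star x) (rg_mul_star_le_star x)

private lemma rg_star_mul_le_star (x : K) : star x * x ≤ star x :=
  left_induct x (star x) x (rg_add_le (rg_le_star x) (rg_mul_star_le_star x))

end Aux

/-- The transitive-closure axiom strengthens to an equality:
`r ‖ x⁺ = (r ‖ x)⁺`, where `x⁺ = x·x⋆`. -/
theorem par_plus_eq {K : Type*} [RGAlgebra K] (r x : K) (hr : r ∈ I) :
    par r (x * star x) = par r x * star (par r x) := by
  refine le_antisymm (rg4 r x hr) ?_
  refine right_induct (par r x) (par r (x * star x)) (par r x) (rg_add_le ?_ ?_)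
  · exact rg_par_mono r (rg_le_mul_star x)
  · rw [← rg3 r _ _ hr, mul_assoc]
    exact rg_par_mono r (rg_mul_le_mul_left x (rg_star_mul_le_star x))
end

section
/- In a quantale where ‖ distributes over arbitrary suprema, the axiom r‖(x·y) = (r‖x)·(r‖y) implies r‖x⁺ ≤ (r‖x)⁺, where x⁺ = ⨆_{i≥1} x^i. -/
/-- In a quantale with two monoid operations `·` and `‖` (the latter
commutative), both distributing over arbitrary suprema, if
`r‖(x·y) = (r‖x)·(r‖y)` for all `x,y`, then `r‖x⁺ ≤ (r‖x)⁺`, where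
`x⁺ = ⨆_{i≥1} x^i` with `x¹ = x` and `x^{i+1} = x·x^i`. -/
theorem par_plus_le {K : Type*} [CompleteLattice K]
    (mul par : K → K → K) (one : K)
    (mul_assoc : ∀ x y z : K, mul (mul x y) z = mul x (mul y z))
    (mul_one : ∀ x : K, mul x one = x) (one_mul : ∀ x : K, mul one x = x)
    (par_assoc : ∀ x y z : K, par (par x y) z = par x (par y z))
    (par_comm : ∀ x y : K, par x y = par y x)
    (par_one : ∀ x : K, par x one = x)
    (mul_sSup : ∀ (x : K) (S : Set K), mul x (sSup S) = ⨆ y ∈ S, mul x y)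
    (sSup_mul : ∀ (S : Set K) (y : K), mul (sSup S) y = ⨆ x ∈ S, mul x y)
    (par_sSup : ∀ (x : K) (S : Set K), par x (sSup S) = ⨆ y ∈ S, par x y)
    (pow : K → ℕ → K)
    (pow_one : ∀ x : K, pow x 1 = x)
    (pow_succ : ∀ (x : K) (i : ℕ), pow x (i + 1) = mul x (pow x i))
    (r : K) (split : ∀ x y : K, par r (mul x y) = mul (par r x) (par r y))
    (x : K) :
    par r (⨆ i ∈ {i : ℕ | 1 ≤ i}, pow x i) ≤ ⨆ i ∈ {i : ℕ | 1 ≤ i}, pow (par r x) i := by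
  have key : ∀ i, 1 ≤ i → par r (pow x i) = pow (par r x) i := by
    intro i hi
    induction i with
    | zero => omega
    | succ n ih =>
      rcases Nat.eq_or_lt_of_le hi with h | h
      · simp [← h, pow_one]
      · have hn : 1 ≤ n := by omega
        rw [pow_succ, split, ih hn, pow_succ]
  have heq : (⨆ i ∈ {i : ℕ | 1 ≤ i}, pow x i) = sSup ((pow x) '' {i : ℕ | 1 ≤ i}) := by
    rw [sSup_image]
  rw [heq, par_sSup]
  apply iSup₂_le
  rintro y ⟨i, hi, rfl⟩
  rw [key i hi]
  exact le_iSup₂ (f := fun i _ => pow (par r x) i) i hi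
end

section
/- The rely-guarantee sequential composition rule is derivable: if r,g ⊢ {p}x{q} and r,g ⊢ {q}y{s} then r,g ⊢ {p}x·y{s}. -/
open RGAlgebra

/-- Jones quintuple encoding: `r,g ⊢ {p}x{q} ↔ p·(r‖x) ≤ q ∧ x ≤ g`. -/
def quintuple {K : Type*} [RGAlgebra K] (r g p x q : K) : Prop :=
  p * par r x ≤ q ∧ x ≤ g

lemma rg_mul_le_mul {K : Type*} [RGAlgebra K] {a b c d : K}
    (h1 : a ≤ b) (h2 : c ≤ d) : a * c ≤ b * d := by
  rw [le_def] at h1 h2 ⊢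
  calc a * c + b * d = a * c + b * (c + d) := by rw [h2]
    _ = (a + b) * c + b * d := by rw [mul_add, add_mul, add_assoc]
    _ = b * c + b * d := by rw [h1]
    _ = b * (c + d) := by rw [mul_add]
    _ = b * d := by rw [h2]

/-- The rely-guarantee sequential composition rule. -/
theorem rg_sequential {K : Type*} [RGAlgebra K] (r g p q s x y : K)
    (hr : r ∈ I) (hg : g ∈ I)
    (h1 : quintuple r g p x q) (h2 : quintuple r g q y s) :
    quintuple r g p (x * y) s := by
  obtain ⟨h1a, h1b⟩ := h1
  obtain ⟨h2a, h2b⟩ := h2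
  constructor
  · rw [rg3 r x y hr, ← mul_assoc]
    exact le_trans (rg_mul_le_mul h1a le_rfl) h2a
  · have hg2 : g = g * g := by
      have := rg3 g 1 1 hg
      rwa [one_mul, par_one] at this
    calc x * y ≤ g * g := rg_mul_le_mul h1b h2b
      _ = g := hg2.symm
end

section
/- The rely-guarantee parallel rule is derivable: if r₁,g₁ ⊢ {p₁}x{q₁}, r₂,g₂ ⊢ {p₂}y{q₂}, g₁ ≤ r₂ and g₂ ≤ r₁, then r₁⊓r₂, g₁‖g₂ ⊢ {p₁⊓p₂} x‖y {q₁⊓q₂}. -/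
open RGAlgebra

/-- The rely-guarantee parallel rule. -/
theorem rg_parallel {K : Type*} [RGAlgebra K]
    (r₁ r₂ g₁ g₂ p₁ p₂ q₁ q₂ x y : K)
    (hr₁ : r₁ ∈ I) (hr₂ : r₂ ∈ I) (hg₁ : g₁ ∈ I) (hg₂ : g₂ ∈ I)
    (h1 : quintuple r₁ g₁ p₁ x q₁) (h2 : quintuple r₂ g₂ p₂ y q₂)
    (h3 : g₁ ≤ r₂) (h4 : g₂ ≤ r₁) :
    quintuple (r₁ ⊓ r₂) (par g₁ g₂) (p₁ ⊓ p₂) (par x y) (q₁ ⊓ q₂) := by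
  obtain ⟨hx, hxg⟩ := h1
  obtain ⟨hy, hyg⟩ := h2
  have par_mono_l : ∀ a b c : K, a ≤ b → par a c ≤ par b c := by
    intro a b c h
    rw [le_def] at h ⊢
    rw [par_comm a c, par_comm b c, ← par_distrib, h]
  have par_mono_r : ∀ a b c : K, a ≤ b → par c a ≤ par c b := by
    intro a b c h
    rw [par_comm c a, par_comm c b]; exact par_mono_l a b c h
  have mul_mono_r : ∀ a b c : K, a ≤ b → c * a ≤ c * b := by
    intro a b c h
    rw [le_def] at h ⊢
    rw [← mul_add, h]
  have mul_mono_l : ∀ a b c : K, a ≤ b → a * c ≤ b * c := by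
    intro a b c h
    rw [le_def] at h ⊢
    rw [← add_mul, h]
  have key : ∀ r a b : K, r ∈ I → b ≤ r → par r (par a b) ≤ par r a := by
    intro r a b hr hb
    calc par r (par a b) ≤ par r (par a r) := par_mono_r _ _ _ (par_mono_r _ _ _ hb)
      _ = par (par r r) a := by rw [par_comm a r, ← par_assoc]
      _ ≤ par r a := par_mono_l _ _ _ (rg1 r hr)
  constructor
  · apply le_inf
    · calc (p₁ ⊓ p₂) * par (r₁ ⊓ r₂) (par x y)
          ≤ p₁ * par r₁ (par x y) := by
            apply le_trans (mul_mono_l _ _ _ inf_le_left)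
            exact mul_mono_r _ _ _ (par_mono_l _ _ _ inf_le_left)
        _ ≤ p₁ * par r₁ x :=
            mul_mono_r _ _ _ (key r₁ x y hr₁ (le_trans hyg h4))
        _ ≤ q₁ := hx
    · calc (p₁ ⊓ p₂) * par (r₁ ⊓ r₂) (par x y)
          ≤ p₂ * par r₂ (par y x) := by
            apply le_trans (mul_mono_l _ _ _ inf_le_right)
            rw [par_comm x y]
            exact mul_mono_r _ _ _ (par_mono_l _ _ _ inf_le_right)
        _ ≤ p₂ * par r₂ y :=
            mul_mono_r _ _ _ (key r₂ y x hr₂ (le_trans hxg h3))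
        _ ≤ q₂ := hy
  · exact le_trans (par_mono_l _ _ _ hxg) (par_mono_r _ _ _ hyg)
end

section
/- The map π = λX. X ⊓ c on a bi-Kleene algebra with meet is a retraction (π² = π), and consequently x ∈ π(K) if and only if π(x) = x; the induced structure (π(K), +_π, ·_π, ⋆_π, 0, 1) with x •_π y = π(x • y) and x^π = π(x⋆) is a Kleene algebra, given that π satisfies x⋆ ≤_π π(x)⋆, x·y ≤_π π(x)·π(y), and the induction laws z + x·y ≤_π y → x⋆·z ≤_π y and z + y·x ≤_π y → z·x⋆ ≤_π y, where x ≤_π y means π(x) ≤ π(y). -/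
/-- A bi-Kleene algebra with a meet `⊓` making the additive structure a
distributive lattice (join given by `+`, i.e. `x ≤ y ↔ x + y = y`):
a Kleene algebra `(K,+,·,0,1,⋆)` together with a commutative Kleene algebra
`(K,+,‖,0,1,⁽⋆⁾)`. -/
class BiKleeneMeet (K : Type*) extends Semiring K, DistribLattice K where
  add_idem : ∀ x : K, x + x = x
  le_def : ∀ x y : K, x ≤ y ↔ x + y = y
  star : K → K
  left_unfold : ∀ x : K, 1 + x * star x ≤ star x
  left_induct : ∀ x y z : K, z + x * y ≤ y → star x * z ≤ y
  right_induct : ∀ x y z : K, z + y * x ≤ y → z * star x ≤ y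
  par : K → K → K
  par_assoc : ∀ x y z : K, par (par x y) z = par x (par y z)
  par_comm : ∀ x y : K, par x y = par y x
  par_one : ∀ x : K, par x 1 = x
  par_zero : ∀ x : K, par x 0 = 0
  par_distrib : ∀ x y z : K, par x (y + z) = par x y + par x z
  pstar : K → K
  par_left_unfold : ∀ x : K, 1 + par x (pstar x) ≤ pstar x
  par_induct : ∀ x y z : K, z + par x y ≤ y → par (pstar x) z ≤ y

open BiKleeneMeet

/-- The map `π = λx. x ⊓ c` is a retraction (`π² = π`), hence
`x ∈ π(K) ↔ π(x) = x`; and, given the properties `x⋆ ≤_π π(x)⋆`,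
`x·y ≤_π π(x)·π(y)` and the `≤_π`-induction laws (where `x ≤_π y` means
`π(x) ≤ π(y)`, and `1` lies below the healthiness condition `c`), the
induced structure `(π(K), +_π, ·_π, ⋆_π, 0, 1)`, with `x •_π y = π(x • y)`
and `x^π = π(x⋆)`, is a Kleene algebra. -/
theorem pi_kleene_algebra {K : Type*} [BiKleeneMeet K] (c : K)
    (π : K → K) (hπ : ∀ x : K, π x = x ⊓ c) (hc : (1 : K) ≤ c)
    (con1 : ∀ x : K, π (star x) ≤ π (star (π x)))
    (con2 : ∀ x y : K, π (x * y) ≤ π (π x * π y))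
    (con3 : ∀ x y z : K, π (z + x * y) ≤ π y → π (star x * z) ≤ π y)
    (con4 : ∀ x y z : K, π (z + y * x) ≤ π y → π (z * star x) ≤ π y) :
    -- π is a retraction and π(K) is its set of fixed points
    (∀ x : K, π (π x) = π x) ∧
    (∀ x : K, x ∈ Set.range π ↔ π x = x) ∧
    -- the constants 0 and 1 belong to π(K)
    π (0 : K) = 0 ∧ π (1 : K) = 1 ∧
    -- (π(K), +_π, 0) is an idempotent commutative monoid whose order is ≤
    (∀ x y z : K, π x = x → π y = y → π z = z →
      π (π (x + y) + z) = π (x + π (y + z)) ∧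
      π (x + y) = π (y + x) ∧ π (x + x) = x ∧ π (x + 0) = x ∧
      (x ≤ y ↔ π (x + y) = y)) ∧
    -- (π(K), ·_π, 1) is a monoid with zero 0
    (∀ x y z : K, π x = x → π y = y → π z = z →
      π (π (x * y) * z) = π (x * π (y * z)) ∧
      π (x * 1) = x ∧ π (1 * x) = x ∧ π (x * 0) = 0 ∧ π (0 * x) = 0) ∧
    -- ·_π distributes over +_π
    (∀ x y z : K, π x = x → π y = y → π z = z →
      π (x * π (y + z)) = π (π (x * y) + π (x * z)) ∧
      π (π (x + y) * z) = π (π (x * z) + π (y * z))) ∧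
    -- star axioms: left unfold and both induction laws
    (∀ x : K, π x = x → π (1 + π (x * π (star x))) ≤ π (star x)) ∧
    (∀ x y z : K, π x = x → π y = y → π z = z →
      π (z + π (x * y)) ≤ y → π (π (star x) * z) ≤ y) ∧
    (∀ x y z : K, π x = x → π y = y → π z = z →
      π (z + π (y * x)) ≤ y → π (z * π (star x)) ≤ y) := by
  classical
  -- basic facts
  have sup_add : ∀ x y : K, x ⊔ y = x + y := by
    intro x y
    apply le_antisymm
    · apply sup_le
      · rw [le_def]; rw [← add_assoc, BiKleeneMeet.add_idem]
      · rw [le_def]; rw [add_comm x y, ← add_assoc, BiKleeneMeet.add_idem]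
    · rw [le_def]
      have h1 : x + (x ⊔ y) = x ⊔ y := (le_def x _).mp le_sup_left
      have h2 : y + (x ⊔ y) = x ⊔ y := (le_def y _).mp le_sup_right
      rw [add_assoc, h2, h1]
  have πadd : ∀ x y : K, π (x + y) = π x + π y := by
    intro x y
    rw [hπ, hπ, hπ, ← sup_add, ← sup_add, inf_sup_right]
  have πle : ∀ x : K, π x ≤ x := by intro x; rw [hπ]; exact inf_le_left
  have πmono : ∀ x y : K, x ≤ y → π x ≤ π y := by
    intro x y h; rw [hπ, hπ]; exact inf_le_inf_right c h
  have πidem : ∀ x : K, π (π x) = π x := by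
    intro x; rw [hπ, hπ x, inf_assoc, inf_idem]
  have mul_le_right : ∀ a b d : K, a ≤ b → a * d ≤ b * d := by
    intro a b d h; rw [le_def] at h ⊢; rw [← add_mul, h]
  have mul_le_left : ∀ a b d : K, a ≤ b → d * a ≤ d * b := by
    intro a b d h; rw [le_def] at h ⊢; rw [← mul_add, h]
  have L : ∀ x y : K, π (π x * π y) = π (x * y) := by
    intro x y
    apply le_antisymm
    · exact πmono _ _ (le_trans (mul_le_right _ _ _ (πle x)) (mul_le_left _ _ _ (πle y)))
    · exact con2 x y
  have Lr : ∀ x y : K, π (x * π y) = π (x * y) := by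
    intro x y
    have h1 := L x (π y)
    rw [πidem] at h1
    rw [← h1, L]
  have Ll : ∀ x y : K, π (π x * y) = π (x * y) := by
    intro x y
    have h1 := L (π x) y
    rw [πidem] at h1
    rw [← h1, L]
  have π0 : π (0 : K) = 0 := by
    rw [hπ]
    refine inf_eq_left.mpr ?_
    rw [le_def, zero_add]
  have π1 : π (1 : K) = 1 := by rw [hπ]; exact inf_eq_left.mpr hc
  refine ⟨πidem, ?_, π0, π1, ?_, ?_, ?_, ?_, ?_, ?_⟩
  · intro x
    constructor
    · rintro ⟨y, rfl⟩; exact πidem y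
    · intro h; exact ⟨x, h⟩
  · intro x y z hx hy hz
    have hxy : π (x + y) = x + y := by rw [πadd, hx, hy]
    have hyz : π (y + z) = y + z := by rw [πadd, hy, hz]
    refine ⟨?_, ?_, ?_, ?_, ?_⟩
    · rw [hxy, hyz, add_assoc]
    · rw [add_comm]
    · rw [BiKleeneMeet.add_idem, hx]
    · rw [add_zero, hx]
    · rw [hxy, le_def]
  · intro x y z hx hy hz
    refine ⟨?_, ?_, ?_, ?_, ?_⟩
    · rw [Ll, Lr, mul_assoc]
    · rw [mul_one, hx]
    · rw [one_mul, hx]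
    · rw [mul_zero, π0]
    · rw [zero_mul, π0]
  · intro x y z hx hy hz
    constructor
    · rw [Lr, mul_add, πadd, πadd, πidem, πidem]
    · rw [Ll, add_mul, πadd, πadd, πidem, πidem]
  · intro x hx
    have h1 : π (1 + π (x * π (star x))) = π (1 + x * star x) := by
      rw [πadd, πadd, πidem, Lr]
    rw [h1]
    exact πmono _ _ (left_unfold x)
  · intro x y z hx hy hz h
    have h1 : π (z + π (x * y)) = π (z + x * y) := by rw [πadd, πadd, πidem]
    rw [h1] at h
    have h2 := con3 x y z (le_of_le_of_eq h hy.symm)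
    exact le_trans (le_of_eq (Ll (star x) z)) (le_trans h2 (le_of_eq hy))
  · intro x y z hx hy hz h
    have h1 : π (z + π (y * x)) = π (z + y * x) := by rw [πadd, πadd, πidem]
    rw [h1] at h
    have h2 := con4 x y z (le_of_le_of_eq h hy.symm)
    exact le_trans (le_of_eq (Lr z (star x))) (le_trans h2 (le_of_eq hy))
end
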